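/- For the Hirzebruch surface F_2 (the unique singular Del Pezzo surface of degree 8), Peyre's constant is α(F_2) = 1/8; that is, 2 · vol{x ∈ ℝ² : B((1,0), x) ≥ 0, B((0,1), x) ≥ 0, and 0 ≤ B((2,4), x) ≤ 1} = 1/8, where vol is the standard Lebesgue measure on ℝ². -/
import Mathlib


open MeasureTheory Set

/-- The intersection form on `Pic(F₂) = ℤΣ ⊕ ℤF`:
`Σ·Σ = -2`, `Σ·F = 1`, `F·F = 0`. -/
def interF2 (x y : Fin 2 → ℝ) : ℝ :=
  -2 * x 0 * y 0 + x 0 * y 1 + x 1 * y 0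

/-- Volume of the closed region between two measurable functions. -/
lemma volume_region_cc {f g : ℝ → ℝ} {s : Set ℝ} (hf : Measurable f) (hg : Measurable g)
    (hs : MeasurableSet s) :
    (volume : Measure ℝ).prod volume {p : ℝ × ℝ | p.1 ∈ s ∧ p.2 ∈ Icc (f p.1) (g p.1)} =
      ∫⁻ y in s, ENNReal.ofReal ((g - f) y) := by
  classical
  rw [Measure.prod_apply (measurableSet_region_between_cc hf hg hs)]
  have h :
      (fun x => volume (Prod.mk x ⁻¹' {p : ℝ × ℝ | p.1 ∈ s ∧ p.2 ∈ Icc (f p.1) (g p.1)})) =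
        s.indicator fun x => ENNReal.ofReal (g x - f x) := by
    funext x
    rw [indicator_apply]
    split_ifs with h
    · have hx : Prod.mk x ⁻¹' {p : ℝ × ℝ | p.1 ∈ s ∧ p.2 ∈ Icc (f p.1) (g p.1)} =
        Icc (f x) (g x) := by
        ext a; simp [h]
      rw [hx, Real.volume_Icc]
    · have hx : Prod.mk x ⁻¹' {p : ℝ × ℝ | p.1 ∈ s ∧ p.2 ∈ Icc (f p.1) (g p.1)} = ∅ := by
        ext a; simp [h]
      simp only [mem_Icc] at hx
      simp [hx, h]
  rw [h, lintegral_indicator hs]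
  simp only [Pi.sub_apply]

theorem alpha_F2 :
    2 * (volume {x : Fin 2 → ℝ |
      0 ≤ interF2 ![1, 0] x ∧ 0 ≤ interF2 ![0, 1] x ∧
      0 ≤ interF2 ![2, 4] x ∧ interF2 ![2, 4] x ≤ 1}).toReal = 1 / 8 := by
  have e := (MeasurableEquiv.piFinTwo (fun _ : Fin 2 => ℝ))
  set T : Set (ℝ × ℝ) := {p : ℝ × ℝ | p.1 ∈ Icc (0 : ℝ) (1/4) ∧
    p.2 ∈ Icc (2 * p.1) (1/2)} with hT
  have hTmeas : MeasurableSet T :=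
    measurableSet_region_between_cc (by fun_prop) measurable_const measurableSet_Icc
  -- the set in the statement is the preimage of T under the equivalence x ↦ (x 0, x 1)
  have hset : {x : Fin 2 → ℝ |
      0 ≤ interF2 ![1, 0] x ∧ 0 ≤ interF2 ![0, 1] x ∧
      0 ≤ interF2 ![2, 4] x ∧ interF2 ![2, 4] x ≤ 1} =
      (MeasurableEquiv.piFinTwo (fun _ : Fin 2 => ℝ)) ⁻¹' T := by
    ext x
    simp only [interF2, Set.mem_setOf_eq, Set.mem_preimage,
      MeasurableEquiv.piFinTwo_apply, hT, Set.mem_Icc,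
      Matrix.cons_val_zero, Matrix.cons_val_one, Matrix.head_cons]
    constructor
    · rintro ⟨h1, h2, h3, h4⟩
      refine ⟨⟨by linarith, by linarith⟩, by linarith, by linarith⟩
    · rintro ⟨⟨h1, h2⟩, h3, h4⟩
      refine ⟨by linarith, by linarith, by linarith, by linarith⟩
  have hvol : volume ((MeasurableEquiv.piFinTwo (fun _ : Fin 2 => ℝ)) ⁻¹' T) = volume T :=
    (MeasureTheory.volume_preserving_piFinTwo (fun _ : Fin 2 => ℝ)).measure_preimage
      hTmeas.nullMeasurableSet
  have hTvol : volume T = ENNReal.ofReal (1/16) := by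
    have hprod : (volume : Measure (ℝ × ℝ)) = (volume : Measure ℝ).prod volume :=
      (Measure.volume_eq_prod ℝ ℝ)
    set fLow : ℝ → ℝ := fun a => 2 * a with hfLow
    set gHigh : ℝ → ℝ := fun _ => (1/2 : ℝ) with hgHigh
    have hTT : T = {p : ℝ × ℝ | p.1 ∈ Icc (0:ℝ) (1/4) ∧ p.2 ∈ Icc (fLow p.1) (gHigh p.1)} := rfl
    rw [hprod, hTT, volume_region_cc (by fun_prop) (by fun_prop) measurableSet_Icc]
    rw [← ofReal_integral_eq_lintegral_ofReal]
    · congr 1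
      have h2 : ∫ y in Icc (0:ℝ) (1/4), (gHigh - fLow) y =
          ∫ y in (0:ℝ)..(1/4), (1/2 - 2 * y) := by
        rw [intervalIntegral.integral_of_le (by norm_num),
          ← MeasureTheory.integral_Icc_eq_integral_Ioc]
        rfl
      rw [h2]
      have h1 : ∫ y in (0:ℝ)..(1/4), (1/2 - 2 * y) =
          (∫ _ in (0:ℝ)..(1/4), (1/2 : ℝ)) - ∫ y in (0:ℝ)..(1/4), 2 * y := by
        apply intervalIntegral.integral_sub
        · exact intervalIntegrable_const
        · exact (intervalIntegral.intervalIntegrable_id.const_mul 2)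
      rw [h1, intervalIntegral.integral_const, intervalIntegral.integral_const_mul,
        integral_id]
      norm_num
    · apply Integrable.sub
      · exact integrable_const _
      · exact (by continuity : Continuous fLow).integrableOn_Icc
    · filter_upwards [ae_restrict_mem measurableSet_Icc] with y hy
      simp only [Pi.sub_apply, Pi.zero_apply, hfLow, hgHigh]
      have := hy.2
      linarith
  rw [hset, hvol, hTvol]
  rw [ENNReal.toReal_ofReal (by norm_num)]
  norm_num
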